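/- Let (T₀, T̃₀) be a pair of closed densely defined operators on a complex Hilbert space H satisfying (T1) and (T2), and let V and Ṽ be subspaces of the graph space W that contain W₀. Then (T₁|_V)* = T̃₁|_Ṽ if and only if Ṽ = V^{[⊥]}, and (T̃₁|_Ṽ)* = T₁|_V if and only if V = Ṽ^{[⊥]}. In particular, if V is closed in W, then the single condition Ṽ = V^{[⊥]} implies that T₁|_V and T̃₁|_Ṽ are mutually adjoint. -/

import Mathlib

open LinearPMap
open scoped LinearPMap

noncomputable section

variable {H : Type*} [NormedAddCommGroup H] [InnerProductSpace ℂ H] [CompleteSpace H]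

local notation "⟪" x ", " y "⟫" => @inner ℂ _ _ x y

/-- Conditions (T1)–(T2) for a pair of operators with common dense domain. -/
structure IsPreFriedrichsPair (T Tt : H →ₗ.[ℂ] H) : Prop where
  dom_eq : T.domain = Tt.domain
  dense' : Dense (T.domain : Set H)
  t1 : ∀ (φ : T.domain) (ψ : Tt.domain), ⟪T φ, (ψ : H)⟫ = ⟪(φ : H), Tt ψ⟫
  t2 : ∃ c : ℝ, 0 < c ∧ ∀ φ : (T + Tt).domain, ‖(T + Tt) φ‖ ≤ c * ‖(φ : H)‖

/-- A joint pair of abstract Friedrichs operators: (T1)–(T3). -/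
structure IsFriedrichsPair (T Tt : H →ₗ.[ℂ] H) extends IsPreFriedrichsPair T Tt : Prop where
  t3 : ∃ μ₀ : ℝ, 0 < μ₀ ∧ ∀ φ : (T + Tt).domain,
        2 * μ₀ * ‖(φ : H)‖ ^ 2 ≤ (⟪(T + Tt) φ, (φ : H)⟫).re

/-- The `[⊥]`-orthogonal complement, inside the graph space `W = dom T₁ = dom T̃₁`, of a set
`S ⊆ W`, with respect to the boundary form `[u | v] := ⟪T₁ u, v⟫ − ⟪u, T̃₁ v⟫`. -/
def bdryPerp (T₁ Tt₁ : H →ₗ.[ℂ] H) (S : Set H) : Set H :=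
  {x | ∃ hx : x ∈ T₁.domain,
    ∀ (v : T₁.domain) (w : Tt₁.domain), (v : H) = (w : H) → (v : H) ∈ S →
      ⟪T₁ ⟨x, hx⟩, (v : H)⟫ - ⟪x, Tt₁ w⟫ = 0}

/-!
The bounded operator `T + T̃` extends to a bounded self-adjoint `D` on `H`, and `T₁ + T̃₁ = D` on
the graph space; hence `dom T₁ = dom T̃₁` and the boundary form is Hermitian,
`[u | v] = conj [v | u]`. Since `T₀ ⊆ T₁|_V ⊆ T₁`, taking adjoints gives `(T₁|_V)* ⊆ T₀* = T̃₁`,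
so `(T₁|_V)*` is the restriction of `T̃₁` to its domain, and by Hermitian symmetry that domain is
exactly `V^{[⊥]}`. The second equivalence is the first one for the pair `(T̃, T)`, whose `[⊥]` is
the same. Finally, if `V` is closed in `W` then `T₁|_V` is a closed operator, hence the adjoint of
its adjoint `T̃₁|_Ṽ`.
-/

namespace LinearPMap

variable {𝕜 E F : Type*} [RCLike 𝕜]
  [NormedAddCommGroup E] [InnerProductSpace 𝕜 E]
  [NormedAddCommGroup F] [InnerProductSpace 𝕜 F]

open scoped InnerProductSpace

theorem adjoint_antitone [CompleteSpace E] {S R : E →ₗ.[𝕜] F} (hS : Dense (S.domain : Set E))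
    (h : S ≤ R) : R† ≤ S† :=
  IsFormalAdjoint.le_adjoint hS fun x y => by
    rw [h.2 (x := x) (y := ⟨x, h.1 x.2⟩) rfl, ← inner_conj_symm,
      ← (adjoint_isFormalAdjoint (hS.mono h.1) y ⟨x, h.1 x.2⟩), inner_conj_symm]

theorem le_domRestrict {f g : E →ₗ.[𝕜] F} {V : Submodule 𝕜 E} (h : f ≤ g) (hV : f.domain ≤ V) :
    f ≤ g.domRestrict V :=
  ⟨fun _ hx => ⟨hV hx, h.1 hx⟩, fun _ y hxy => (h.2 (y := ⟨y, y.2.2⟩) hxy).trans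
    (domRestrict_apply rfl).symm⟩

theorem eq_domRestrict_of_le {f g : E →ₗ.[𝕜] F} (h : f ≤ g) : f = g.domRestrict f.domain :=
  eq_of_le_of_domain_eq (le_domRestrict h le_rfl)
    (by rw [domRestrict_domain, inf_eq_left.mpr h.1])

theorem mem_adjoint_domain_iff_of_adjoint_le [CompleteSpace E] {R : E →ₗ.[𝕜] F}
    {B : F →ₗ.[𝕜] E} (hR : Dense (R.domain : Set E)) (h : R† ≤ B) (y : F) :
    y ∈ R†.domain ↔ ∃ hy : y ∈ B.domain, ∀ x : R.domain, ⟪B ⟨y, hy⟩, x⟫_𝕜 = ⟪y, R x⟫_𝕜 :=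
  ⟨fun hy => ⟨h.1 hy, fun x =>
    h.2 (x := ⟨y, hy⟩) (y := ⟨y, h.1 hy⟩) rfl ▸ adjoint_isFormalAdjoint hR ⟨y, hy⟩ x⟩,
    fun ⟨hy, hB⟩ => mem_adjoint_domain_of_exists y ⟨B ⟨y, hy⟩, hB⟩⟩

theorem coe_graph_domRestrict (f : E →ₗ.[𝕜] F) (V : Submodule 𝕜 E) :
    ((f.domRestrict V).graph : Set (E × F)) = {p | p.1 ∈ V ∧ p ∈ f.graph} := by
  ext ⟨u, v⟩
  simp only [SetLike.mem_coe, mem_graph_iff, Set.mem_ofPred_eq]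
  constructor
  · rintro ⟨x, rfl, rfl⟩
    exact ⟨x.2.1, ⟨x, x.2.2⟩, rfl, (domRestrict_apply rfl).symm⟩
  · rintro ⟨hV, x, rfl, rfl⟩
    exact ⟨⟨x, hV, x.2⟩, rfl, domRestrict_apply rfl⟩

theorem adjoint_adjoint_of_isClosed [CompleteSpace E] [CompleteSpace F] {T : E →ₗ.[𝕜] F}
    (hT : T.IsClosed) (hd : Dense (T.domain : Set E)) (hd' : Dense (T†.domain : Set F)) :
    T†† = T := by
  refine le_antisymm (le_of_le_graph fun p hp => ?_) ((adjoint_isFormalAdjoint hd).le_adjoint hd')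
  obtain ⟨u, v⟩ := p
  obtain ⟨x, rfl, rfl⟩ := (mem_graph_iff _).mp hp
  set K : Submodule 𝕜 (WithLp 2 (E × F)) :=
    T.graph.comap (WithLp.linearEquiv 2 𝕜 (E × F)).toLinearMap
  have hK : _root_.IsClosed (K : Set (WithLp 2 (E × F))) :=
    hT.preimage (WithLp.prodContinuousLinearEquiv 2 𝕜 E F).continuous
  suffices WithLp.toLp 2 ((x : E), T†† x) ∈ Kᗮᗮ by
    rwa [Submodule.orthogonal_orthogonal_eq_closure, hK.submodule_topologicalClosure_eq] at this
  rw [Submodule.mem_orthogonal]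
  intro q hq
  -- `q = (a, b) ⊥ graph T` says exactly that `T† b = -a`
  have hb : ∀ u : T.domain, ⟪-(WithLp.ofLp q).1, (u : E)⟫_𝕜 = ⟪(WithLp.ofLp q).2, T u⟫_𝕜 := by
    intro u
    have := (Submodule.mem_orthogonal' _ _).mp hq (WithLp.toLp 2 ((u : E), T u)) (T.mem_graph u)
    rw [WithLp.prod_inner_apply] at this
    rw [inner_neg_left, neg_eq_iff_add_eq_zero]
    simpa using this
  have hbd : (WithLp.ofLp q).2 ∈ T†.domain := mem_adjoint_domain_of_exists _ ⟨_, hb⟩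
  have hTb := adjoint_apply_eq hd ⟨_, hbd⟩ hb
  rw [WithLp.prod_inner_apply, WithLp.ofLp_toLp, ← inner_conj_symm _ (T†† x : F),
    adjoint_isFormalAdjoint hd' x ⟨_, hbd⟩, inner_conj_symm, hTb, inner_neg_left, add_neg_cancel]

end LinearPMap

namespace IsPreFriedrichsPair

variable {T Tt : H →ₗ.[ℂ] H}

protected lemma symm (hF : IsPreFriedrichsPair T Tt) : IsPreFriedrichsPair Tt T where
  dom_eq := hF.dom_eq.symm
  dense' := hF.dom_eq ▸ hF.dense'
  t1 φ ψ := by rw [← inner_conj_symm, ← hF.t1 ψ φ, inner_conj_symm]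
  t2 := add_comm T Tt ▸ hF.t2

lemma le_adjoint (hF : IsPreFriedrichsPair T Tt) : T ≤ Tt† :=
  IsFormalAdjoint.le_adjoint hF.symm.dense' hF.symm.t1

lemma exists_isSelfAdjoint_extension (hF : IsPreFriedrichsPair T Tt) :
    ∃ D : H →L[ℂ] H, IsSelfAdjoint D ∧
      ∀ (x : H) (hx : x ∈ T.domain) (hx' : x ∈ Tt.domain), D x = T ⟨x, hx⟩ + Tt ⟨x, hx'⟩ := by
  obtain ⟨c, -, hc⟩ := hF.t2
  have hd : Dense ((T + Tt).domain : Set H) := by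
    rw [add_domain, ← hF.dom_eq, inf_idem]
    exact hF.dense'
  let f : (T + Tt).domain →L[ℂ] H :=
    LinearMap.mkContinuous (T + Tt).toFun c fun x => by simpa using hc x
  let D := f.extend (T + Tt).domain.subtypeL
  have hD (φ : (T + Tt).domain) : D φ = (T + Tt) φ :=
    ContinuousLinearMap.extend_eq f hd.denseRange_val
      isUniformEmbedding_subtype_val.isUniformInducing φ
  refine ⟨D, LinearMap.IsSymmetric.isSelfAdjoint fun x y => ?_,
    fun x hx hx' => hD ⟨x, hx, hx'⟩⟩
  refine congrFun (Continuous.ext_on (hd.prod hd) (f := fun p : H × H => ⟪D p.1, p.2⟫)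
    (g := fun p => ⟪p.1, D p.2⟫) (by fun_prop) (by fun_prop) ?_) (x, y)
  rintro ⟨φ, ψ⟩ ⟨hφ, hψ⟩
  change ⟪D (⟨φ, hφ⟩ : (T + Tt).domain), ψ⟫ = ⟪φ, D (⟨ψ, hψ⟩ : (T + Tt).domain)⟫
  rw [hD, hD, LinearPMap.add_apply, LinearPMap.add_apply, inner_add_left, inner_add_right,
    hF.t1 ⟨φ, hφ.1⟩ ⟨ψ, hψ.2⟩, hF.symm.t1 ⟨φ, hφ.2⟩ ⟨ψ, hψ.1⟩, add_comm]

lemma exists_adjoint_eq_sub (hF : IsPreFriedrichsPair T Tt) :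
    ∃ D : H →L[ℂ] H, IsSelfAdjoint D ∧ ∀ (u : H) (hu : u ∈ (Tt†).domain),
      ∃ hu' : u ∈ (T†).domain, T† ⟨u, hu'⟩ = D u - Tt† ⟨u, hu⟩ := by
  obtain ⟨D, hD, hDext⟩ := hF.exists_isSelfAdjoint_extension
  refine ⟨D, hD, fun u hu => ?_⟩
  have hx₀ (x : T.domain) : ⟪D u - Tt† ⟨u, hu⟩, x⟫ = ⟪u, T x⟫ := by
    have hx' : (x : H) ∈ Tt.domain := hF.dom_eq ▸ x.2
    have hDux : ⟪D u, x⟫ = ⟪u, D x⟫ := hD.isSymmetric u x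
    rw [inner_sub_left, hDux, hDext x x.2 hx', inner_add_right,
      adjoint_isFormalAdjoint hF.symm.dense' ⟨u, hu⟩ ⟨x, hx'⟩, add_sub_cancel_right]
  exact ⟨mem_adjoint_domain_of_exists u ⟨_, hx₀⟩, adjoint_apply_eq hF.dense' _ hx₀⟩

lemma adjoint_domain_eq (hF : IsPreFriedrichsPair T Tt) : (Tt†).domain = (T†).domain := by
  obtain ⟨_, _, h⟩ := hF.exists_adjoint_eq_sub
  obtain ⟨_, _, h'⟩ := hF.symm.exists_adjoint_eq_sub
  exact le_antisymm (fun u hu => (h u hu).1) (fun u hu => (h' u hu).1)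

lemma inner_adjoint_sub_inner_adjoint (hF : IsPreFriedrichsPair T Tt) {u v : H}
    (hu : u ∈ (Tt†).domain) (hu' : u ∈ (T†).domain)
    (hv : v ∈ (Tt†).domain) (hv' : v ∈ (T†).domain) :
    ⟪Tt† ⟨u, hu⟩, v⟫ - ⟪u, T† ⟨v, hv'⟩⟫ = ⟪u, Tt† ⟨v, hv⟩⟫ - ⟪T† ⟨u, hu'⟩, v⟫ := by
  obtain ⟨D, hD, h⟩ := hF.exists_adjoint_eq_sub
  obtain ⟨_, hTu⟩ := h u hu
  obtain ⟨_, hTv⟩ := h v hv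
  have hDuv : ⟪D u, v⟫ = ⟪u, D v⟫ := hD.isSymmetric u v
  rw [hTu, hTv, inner_sub_left, inner_sub_right, hDuv]
  ring

lemma mem_bdryPerp_iff (hF : IsPreFriedrichsPair T Tt) {S : Set H} {y : H} :
    y ∈ bdryPerp (Tt†) (T†) S ↔
      ∃ hy : y ∈ (T†).domain, ∀ x : (Tt†).domain, (x : H) ∈ S → ⟪T† ⟨y, hy⟩, x⟫ = ⟪y, Tt† x⟫ := by
  constructor
  · rintro ⟨hyA, h⟩
    refine ⟨hF.adjoint_domain_eq.le hyA, fun ⟨x, hxA⟩ hxS => ?_⟩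
    have hxB := hF.adjoint_domain_eq.le hxA
    have := h ⟨x, hxA⟩ ⟨x, hxB⟩ rfl hxS
    rw [hF.inner_adjoint_sub_inner_adjoint hyA (hF.adjoint_domain_eq.le hyA) hxA hxB] at this
    exact (sub_eq_zero.mp this).symm
  · rintro ⟨hyB, h⟩
    have hyA := hF.adjoint_domain_eq.ge hyB
    refine ⟨hyA, fun ⟨x, hxA⟩ ⟨_, hxB⟩ hxx hxS => ?_⟩
    obtain rfl : x = _ := hxx
    rw [hF.inner_adjoint_sub_inner_adjoint hyA hyB hxA hxB, h ⟨x, hxA⟩ hxS, sub_self]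

lemma bdryPerp_subset_symm (hF : IsPreFriedrichsPair T Tt) (S : Set H) :
    bdryPerp (Tt†) (T†) S ⊆ bdryPerp (T†) (Tt†) S := by
  rintro y ⟨hyA, h⟩
  have hyB := hF.adjoint_domain_eq.le hyA
  refine ⟨hyB, fun ⟨x, hxB⟩ ⟨_, hxA⟩ hxx hxS => ?_⟩
  obtain rfl : x = _ := hxx
  have := h ⟨x, hxA⟩ ⟨x, hxB⟩ rfl hxS
  rw [hF.inner_adjoint_sub_inner_adjoint hyA hyB hxA hxB] at this
  rw [← neg_sub, this, neg_zero]

lemma bdryPerp_symm (hF : IsPreFriedrichsPair T Tt) (S : Set H) :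
    bdryPerp (T†) (Tt†) S = bdryPerp (Tt†) (T†) S :=
  (hF.symm.bdryPerp_subset_symm S).antisymm (hF.bdryPerp_subset_symm S)

lemma le_domRestrict_adjoint (hF : IsPreFriedrichsPair T Tt) {V : Submodule ℂ H}
    (hV₀ : T.domain ≤ V) : T ≤ (Tt†).domRestrict V :=
  le_domRestrict hF.le_adjoint hV₀

lemma adjoint_domRestrict_le (hF : IsPreFriedrichsPair T Tt) {V : Submodule ℂ H}
    (hV₀ : T.domain ≤ V) : ((Tt†).domRestrict V)† ≤ T† :=
  adjoint_antitone hF.dense' (hF.le_domRestrict_adjoint hV₀)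

lemma coe_adjoint_domRestrict_domain (hF : IsPreFriedrichsPair T Tt) {V : Submodule ℂ H}
    (hV₀ : T.domain ≤ V) :
    ((((Tt†).domRestrict V)†).domain : Set H) = bdryPerp (Tt†) (T†) V := by
  ext y
  rw [SetLike.mem_coe, mem_adjoint_domain_iff_of_adjoint_le
    (hF.dense'.mono (hF.le_domRestrict_adjoint hV₀).1) (hF.adjoint_domRestrict_le hV₀),
    hF.mem_bdryPerp_iff]
  refine exists_congr fun hy => ⟨fun h x hx => ?_, fun h x => ?_⟩
  · rw [h ⟨x, hx, x.2⟩]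
    exact congrArg _ (domRestrict_apply rfl)
  · rw [h ⟨x, x.2.2⟩ x.2.1]
    exact congrArg _ (domRestrict_apply rfl).symm

theorem adjoint_domRestrict_eq_iff (hF : IsPreFriedrichsPair T Tt) {V Vt : Submodule ℂ H}
    (hV₀ : T.domain ≤ V) (hVtW : Vt ≤ (T†).domain) :
    ((Tt†).domRestrict V)† = (T†).domRestrict Vt ↔ (Vt : Set H) = bdryPerp (Tt†) (T†) V := by
  rw [← hF.coe_adjoint_domRestrict_domain hV₀, SetLike.coe_set_eq]
  constructor
  · intro h
    rw [h, domRestrict_domain, inf_eq_left.mpr hVtW]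
  · rintro rfl
    exact eq_domRestrict_of_le (hF.adjoint_domRestrict_le hV₀)

end IsPreFriedrichsPair

theorem statement4_general (T Tt : H →ₗ.[ℂ] H) (hF : IsPreFriedrichsPair T Tt)
    (V Vt : Submodule ℂ H)
    (hV₀ : T.domain ≤ V) (hVW : V ≤ (Tt†).domain)
    (hVt₀ : Tt.domain ≤ Vt) (hVtW : Vt ≤ (T†).domain) :
    ((((Tt†).domRestrict V)† = (T†).domRestrict Vt) ↔
        (Vt : Set H) = bdryPerp (Tt†) (T†) (V : Set H)) ∧
    ((((T†).domRestrict Vt)† = (Tt†).domRestrict V) ↔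
        (V : Set H) = bdryPerp (Tt†) (T†) (Vt : Set H)) ∧
    (IsClosed {p : H × H | p.1 ∈ V ∧ p ∈ (Tt†).graph} →
      (Vt : Set H) = bdryPerp (Tt†) (T†) (V : Set H) →
      (((Tt†).domRestrict V)† = (T†).domRestrict Vt ∧
        ((T†).domRestrict Vt)† = (Tt†).domRestrict V)) := by
  have adjoint_V := hF.adjoint_domRestrict_eq_iff hV₀ hVtW
  have adjoint_Vt := hF.symm.adjoint_domRestrict_eq_iff hVt₀ hVW
  rw [hF.bdryPerp_symm] at adjoint_Vt
  refine ⟨adjoint_V, adjoint_Vt, fun hClosed hVt => ⟨adjoint_V.mpr hVt, ?_⟩⟩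
  have hclosed : ((Tt†).domRestrict V).IsClosed := by
    rwa [LinearPMap.IsClosed, coe_graph_domRestrict]
  have hdense : Dense ((((Tt†).domRestrict V)†).domain : Set H) := by
    rw [adjoint_V.mpr hVt, domRestrict_domain]
    exact hF.symm.dense'.mono (le_inf hVt₀ hF.symm.le_adjoint.1)
  rw [← adjoint_V.mpr hVt]
  exact adjoint_adjoint_of_isClosed hclosed
    (hF.dense'.mono (hF.le_domRestrict_adjoint hV₀).1) hdense

/-- Let `(T₀, T̃₀)` be a pair of closed densely defined operators satisfying
(T1)–(T2), and let `V, Ṽ` be subspaces of the graph space `W` containing `W₀ = dom T₀ = dom T̃₀`.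
Then `(T₁|_V)* = T̃₁|_Ṽ ↔ Ṽ = V^{[⊥]}` and `(T̃₁|_Ṽ)* = T₁|_V ↔ V = Ṽ^{[⊥]}`; and if `V` is
closed in `W`, the single condition `Ṽ = V^{[⊥]}` implies that `T₁|_V` and `T̃₁|_Ṽ` are
mutually adjoint. -/
theorem statement4 (T Tt : H →ₗ.[ℂ] H) (hF : IsPreFriedrichsPair T Tt)
    (hT : T.IsClosed) (hTt : Tt.IsClosed)
    (V Vt : Submodule ℂ H)
    (hV₀ : T.domain ≤ V) (hVW : V ≤ (Tt†).domain)
    (hVt₀ : Tt.domain ≤ Vt) (hVtW : Vt ≤ (T†).domain) :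
    ((((Tt†).domRestrict V)† = (T†).domRestrict Vt) ↔
        (Vt : Set H) = bdryPerp (Tt†) (T†) (V : Set H)) ∧
    ((((T†).domRestrict Vt)† = (Tt†).domRestrict V) ↔
        (V : Set H) = bdryPerp (Tt†) (T†) (Vt : Set H)) ∧
    (IsClosed {p : H × H | p.1 ∈ V ∧ p ∈ (Tt†).graph} →
      (Vt : Set H) = bdryPerp (Tt†) (T†) (V : Set H) →
      (((Tt†).domRestrict V)† = (T†).domRestrict Vt ∧
        ((T†).domRestrict Vt)† = (Tt†).domRestrict V)) :=
  statement4_general T Tt hF V Vt hV₀ hVW hVt₀ hVtW
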